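/- arXiv:2304.11742 — 3 statements merged into one kernel-verified Lean document; each statement's English description precedes it below -/
import Mathlib

section
/- Let C be a category with a diagram d : A → B, s : B → A, i : A → A', d' : A' → B', s' : B' → A', j : B → B' satisfying j ∘ d = d' ∘ i, i ∘ s = s' ∘ j, s ∘ d = id_A, s' ∘ d' = id_{A'}, and suppose j is a split monomorphism (admits a retraction). Then for every functor F : C → D, the image under F of the square j ∘ d = d' ∘ i is a pullback square in D (i.e., the square is an absolute pullback). -/
open CategoryTheory

/-- With the same commuting data `j ∘ d = d' ∘ i`, `i ∘ s = s' ∘ j`,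
`s ∘ d = id`, `s' ∘ d' = id`, if `j` is a split monomorphism (admits a retraction),
then the square `j ∘ d = d' ∘ i` is an absolute pullback: every functor sends it to a
pullback square. -/
theorem stmt1 {C : Type*} [Category C] {A B A' B' : C}
    (d : A ⟶ B) (s : B ⟶ A) (i : A ⟶ A') (d' : A' ⟶ B') (s' : B' ⟶ A') (j : B ⟶ B')
    (h1 : d ≫ j = i ≫ d') (h2 : s ≫ i = j ≫ s')
    (h3 : d ≫ s = 𝟙 A) (h4 : d' ≫ s' = 𝟙 A')
    (r : B' ⟶ B) (hr : j ≫ r = 𝟙 B)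
    {D : Type*} [Category D] (F : C ⥤ D) :
    IsPullback (F.map d) (F.map i) (F.map j) (F.map d') := by
  have comm : F.map d ≫ F.map j = F.map i ≫ F.map d' := by
    rw [← F.map_comp, ← F.map_comp, h1]
  have hmono : Mono (F.map j) := by
    refine ⟨fun g h hgh => ?_⟩
    have := hgh =≫ F.map r
    simpa [← F.map_comp, hr] using this
  have key2 : s ≫ d ≫ j = j ≫ s' ≫ d' := by
    rw [h1, ← Category.assoc, h2, Category.assoc]
  have key3 : d' ≫ s' ≫ d' = d' := by
    rw [← Category.assoc, h4, Category.id_comp]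
  refine ⟨⟨comm⟩, ⟨Limits.PullbackCone.IsLimit.mk _
    (fun sc => sc.fst ≫ F.map s) (fun sc => ?_) (fun sc => ?_) (fun sc m hm1 hm2 => ?_)⟩⟩
  · apply hmono.right_cancellation
    simp only [Category.assoc, ← F.map_comp]
    rw [key2, F.map_comp, ← Category.assoc, sc.condition, Category.assoc, ← F.map_comp,
      key3, ← sc.condition]
  · simp only [Category.assoc, ← F.map_comp]
    rw [h2, F.map_comp, ← Category.assoc, sc.condition, Category.assoc, ← F.map_comp,
      h4, F.map_id, Category.comp_id]
  · show m = sc.fst ≫ F.map s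
    rw [← hm1, Category.assoc, ← F.map_comp, h3, F.map_id, Category.comp_id]
end

section
/- Dually: let C be a category with a diagram consisting of morphisms d : A → B, s : B → A with s ∘ d = id_A, d' : A' → B', s' : B' → A' with s' ∘ d' = id_{A'}, and j : B → B' making both squares commute, where j is a split epimorphism. Then the square formed by s, j, s', i (i.e., i ∘ s = s' ∘ j) is an absolute pushout: every functor takes it to a pushout square. -/
open CategoryTheory

/-- Dually, with two commuting squares `j ∘ d = d' ∘ i` and
`i ∘ s = s' ∘ j`, `s ∘ d = id`, `s' ∘ d' = id`, if `j` is a split epimorphism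
(admits a section), then the square `i ∘ s = s' ∘ j` is an absolute pushout:
every functor sends it to a pushout square. -/
theorem stmt2 {C : Type*} [Category C] {A B A' B' : C}
    (d : A ⟶ B) (s : B ⟶ A) (i : A ⟶ A') (d' : A' ⟶ B') (s' : B' ⟶ A') (j : B ⟶ B')
    (h1 : d ≫ j = i ≫ d') (h2 : s ≫ i = j ≫ s')
    (h3 : d ≫ s = 𝟙 A) (h4 : d' ≫ s' = 𝟙 A')
    (t : B' ⟶ B) (ht : t ≫ j = 𝟙 B')
    {D : Type*} [Category D] (F : C ⥤ D) :
    IsPushout (F.map s) (F.map j) (F.map i) (F.map s') := by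
  have comm : F.map s ≫ F.map i = F.map j ≫ F.map s' := by
    rw [← F.map_comp, ← F.map_comp, h2]
  refine IsPushout.of_isColimit' ⟨comm⟩ ?_
  refine Limits.PushoutCocone.IsColimit.mk _ (fun c => F.map d' ≫ c.inr) ?_ ?_ ?_
  · intro c
    calc F.map i ≫ F.map d' ≫ c.inr
        = F.map (i ≫ d') ≫ c.inr := by rw [F.map_comp, Category.assoc]
      _ = F.map d ≫ F.map j ≫ c.inr := by rw [← h1, F.map_comp, Category.assoc]
      _ = F.map d ≫ F.map s ≫ c.inl := by rw [← c.condition]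
      _ = F.map (d ≫ s) ≫ c.inl := by rw [F.map_comp, Category.assoc]
      _ = c.inl := by rw [h3, F.map_id, Category.id_comp]
  · intro c
    calc F.map s' ≫ F.map d' ≫ c.inr
        = F.map t ≫ F.map j ≫ F.map s' ≫ F.map d' ≫ c.inr := by
          rw [← Category.assoc, ← Category.assoc, ← F.map_comp, ← F.map_comp, ht,
            F.map_id, Category.id_comp]
      _ = F.map t ≫ F.map s ≫ F.map i ≫ F.map d' ≫ c.inr := by
          rw [← Category.assoc (F.map j), ← F.map_comp, ← h2, F.map_comp, Category.assoc]
      _ = F.map t ≫ F.map s ≫ F.map d ≫ F.map j ≫ c.inr := by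
          rw [← Category.assoc (F.map i), ← F.map_comp, ← h1, F.map_comp, Category.assoc]
      _ = F.map t ≫ F.map s ≫ F.map d ≫ F.map s ≫ c.inl := by rw [← c.condition]
      _ = F.map t ≫ F.map s ≫ c.inl := by
          rw [← Category.assoc (F.map d), ← F.map_comp, h3, F.map_id, Category.id_comp]
      _ = F.map t ≫ F.map j ≫ c.inr := by rw [c.condition]
      _ = c.inr := by rw [← Category.assoc, ← F.map_comp, ht, F.map_id, Category.id_comp]
  · intro c m hl hr
    calc m = F.map (d' ≫ s') ≫ m := by rw [h4, F.map_id, Category.id_comp]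
      _ = F.map d' ≫ F.map s' ≫ m := by rw [F.map_comp, Category.assoc]
      _ = F.map d' ≫ c.inr := by rw [hr]
end

section
/- In the simplex category Δ, for 0 ≤ i < j ≤ n-1, the commutative square formed by the degeneracy maps σ_i : [n] → [n-1], σ_j : [n] → [n-1], σ_{j-1} : [n-1] → [n-2], σ_i : [n-1] → [n-2] (i.e., σ_{j-1} ∘ σ_i = σ_i ∘ σ_j as maps [n] → [n-2]) is an absolute pushout square in Δ. -/
open CategoryTheory SimplexCategory

/-!
The square of degeneracies is split: the faces `δ i`, `δ i` and `δ (j + 2)` are sections of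
`σ i : [n+1] ⟶ [n]`, `σ i : [n+2] ⟶ [n+1]` and `σ (j + 1) : [n+2] ⟶ [n+1]`, and the simplicial
identities between them let one write the factorisation through the square of any cocone using
only these sections and composition. Equations between composites are preserved by every
functor, so the image of the square under any functor is again split, hence a pushout.
-/

namespace CategoryTheory

open Limits

variable {C : Type*} [Category C]

/-- A pushout analogue of `IsSplitCoequalizer`. -/
structure IsSplitPushout {X Y Z P : C} (f : X ⟶ Y) (g : X ⟶ Z) (inl : Y ⟶ P) (inr : Z ⟶ P) where
  w : f ≫ inl = g ≫ inr
  sectionInr : P ⟶ Z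
  sectionInr_inr : sectionInr ≫ inr = 𝟙 P
  sectionFst : Y ⟶ X
  sectionFst_fst : sectionFst ≫ f = 𝟙 Y
  sectionFst_snd : sectionFst ≫ g = inl ≫ sectionInr
  sectionSnd : Z ⟶ X
  sectionSnd_snd : sectionSnd ≫ g = 𝟙 Z
  inr_sectionInr_sectionSnd_fst : inr ≫ sectionInr ≫ sectionSnd ≫ f = sectionSnd ≫ f

namespace IsSplitPushout

variable {X Y Z P : C} {f : X ⟶ Y} {g : X ⟶ Z} {inl : Y ⟶ P} {inr : Z ⟶ P}

def map (s : IsSplitPushout f g inl inr) {D : Type*} [Category D] (F : C ⥤ D) :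
    IsSplitPushout (F.map f) (F.map g) (F.map inl) (F.map inr) where
  w := by rw [← F.map_comp, ← F.map_comp, s.w]
  sectionInr := F.map s.sectionInr
  sectionInr_inr := by rw [← F.map_comp, s.sectionInr_inr, F.map_id]
  sectionFst := F.map s.sectionFst
  sectionFst_fst := by rw [← F.map_comp, s.sectionFst_fst, F.map_id]
  sectionFst_snd := by rw [← F.map_comp, ← F.map_comp, s.sectionFst_snd]
  sectionSnd := F.map s.sectionSnd
  sectionSnd_snd := by rw [← F.map_comp, s.sectionSnd_snd, F.map_id]
  inr_sectionInr_sectionSnd_fst := by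
    simp only [← F.map_comp, s.inr_sectionInr_sectionSnd_fst]

theorem isPushout (s : IsSplitPushout f g inl inr) : IsPushout f g inl inr := by
  refine IsPushout.of_isColimit' ⟨s.w⟩ (PushoutCocone.IsColimit.mk _
    (fun c => s.sectionInr ≫ c.inr) (fun c => ?_) (fun c => ?_) (fun c m _ hr => ?_))
  · calc inl ≫ s.sectionInr ≫ c.inr
        = s.sectionFst ≫ g ≫ c.inr := by
          rw [← Category.assoc, ← s.sectionFst_snd, Category.assoc]
      _ = s.sectionFst ≫ f ≫ c.inl := by rw [c.condition]
      _ = c.inl := by rw [← Category.assoc, s.sectionFst_fst, Category.id_comp]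
  · calc inr ≫ s.sectionInr ≫ c.inr
        = inr ≫ s.sectionInr ≫ s.sectionSnd ≫ g ≫ c.inr := by
          rw [← Category.assoc s.sectionSnd, s.sectionSnd_snd, Category.id_comp]
      _ = (inr ≫ s.sectionInr ≫ s.sectionSnd ≫ f) ≫ c.inl := by
          simp only [c.condition, Category.assoc]
      _ = s.sectionSnd ≫ g ≫ c.inr := by
          rw [s.inr_sectionInr_sectionSnd_fst, Category.assoc, c.condition]
      _ = c.inr := by rw [← Category.assoc, s.sectionSnd_snd, Category.id_comp]
  · calc m = (s.sectionInr ≫ inr) ≫ m := by rw [s.sectionInr_inr, Category.id_comp]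
      _ = s.sectionInr ≫ c.inr := by rw [Category.assoc, hr]

end IsSplitPushout

end CategoryTheory

namespace SimplexCategory

def isSplitPushout_σ_σ {n : ℕ} {i j : Fin (n + 1)} (h : i ≤ j) :
    IsSplitPushout (σ i.castSucc) (σ j.succ) (σ j) (σ i) where
  w := σ_comp_σ h
  sectionInr := δ i.castSucc
  sectionInr_inr := δ_comp_σ_self
  sectionFst := δ i.castSucc.castSucc
  sectionFst_fst := δ_comp_σ_self
  sectionFst_snd := δ_comp_σ_of_le (Fin.castSucc_le_castSucc_iff.mpr h)
  sectionSnd := δ j.succ.succ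
  sectionSnd_snd := δ_comp_σ_succ
  inr_sectionInr_sectionSnd_fst := by
    rw [δ_comp_σ_of_gt ((Fin.castSucc_le_castSucc_iff.mpr h).trans_lt Fin.castSucc_lt_succ),
      ← Category.assoc, ← Category.assoc, Category.assoc (σ i), δ_comp_σ_self, Category.comp_id]

end SimplexCategory

/-- In the simplex category, the commutative square of degeneracy maps
`σ_j ∘ σ_{castSucc i} = σ_i ∘ σ_{succ j}` (for `i ≤ j`, i.e. for a strict pair
`castSucc i < succ j` of degeneracies out of `[n+2]`) is an absolute pushout:
every functor out of the simplex category sends it to a pushout square. -/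
theorem stmt3 (n : ℕ) (i j : Fin (n + 1)) (h : i ≤ j)
    {D : Type*} [Category D] (F : SimplexCategory ⥤ D) :
    IsPushout (F.map (σ (Fin.castSucc i))) (F.map (σ j.succ))
      (F.map (σ j)) (F.map (σ i)) :=
  ((isSplitPushout_σ_σ h).map F).isPushout
end
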